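/- Let μ be a finite Borel measure on a compact Hausdorff space Ω and 0 < p, q < ∞. If p ≤ q, then the Lorentz quasinorm L_{p,q}(μ) satisfies an upper p-estimate and a lower q-estimate: for disjointly supported Borel functions f_1, …, f_n, ‖f_1 + ⋯ + f_n‖_{L_{p,q}} ≤ (Σ_i ‖f_i‖_{L_{p,q}}^p)^{1/p} and ‖f_1 + ⋯ + f_n‖_{L_{p,q}} ≥ (Σ_i ‖f_i‖_{L_{p,q}}^q)^{1/q}. If p > q, then L_{p,q}(μ) satisfies an upper q-estimate and a lower p-estimate: for disjointly supported f_1, …, f_n, ‖f_1 + ⋯ + f_n‖_{L_{p,q}} ≤ (Σ_i ‖f_i‖_{L_{p,q}}^q)^{1/q} and ‖f_1 + ⋯ + f_n‖_{L_{p,q}} ≥ (Σ_i ‖f_i‖_{L_{p,q}}^p)^{1/p}. -/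

import Mathlib

open Set Filter Topology MeasureTheory ENNReal

/-- The Lorentz quasinorm `‖f‖_{L_{p,q}(μ)} = (∫₀^∞ q t^{q-1} μ(|f| > t)^{q/p} dt)^{1/q}`. -/
noncomputable def LorentzNorm {Ω : Type*} [MeasurableSpace Ω]
    (μ : Measure Ω) (p q : ℝ) (f : Ω → ℝ) : ℝ≥0∞ :=
  (∫⁻ t in Ioi (0 : ℝ),
      ENNReal.ofReal (q * t ^ (q - 1)) * μ {x | t < |f x|} ^ (q / p)) ^ (1 / q)

/-- `f₁, …, fₙ` are disjointly supported. -/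
def DisjSupp {Ω : Type*} {n : ℕ} (f : Fin n → Ω → ℝ) : Prop :=
  ∀ i j, i ≠ j → ∀ x, f i x = 0 ∨ f j x = 0

/-!
With `d_f t = μ {|f| > t}` and `w t = q t ^ (q - 1)`, the profile `w ^ (p / q) * d_f` has
`L^{q/p}(0, ∞)` norm `‖f‖_{L_{p,q}} ^ p` and `∫ profile ^ (q / p) = ‖f‖_{L_{p,q}} ^ q`. For
disjointly supported `f i` the distribution functions, hence the profiles, add up. If `s = q / p ≥ 1`,
Minkowski's inequality in `L^s` gives the upper `p`-estimate and the superadditivity of `x ↦ x ^ s`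
the lower `q`-estimate; if `s ≤ 1`, subadditivity of `x ↦ x ^ s` gives the upper `q`-estimate and
the reverse Minkowski inequality (Hölder's inequality with suitable weights) the lower `p`-estimate.
-/

namespace ENNReal

variable {ι : Type*}

theorem sum_rpow_le_rpow_sum (s : Finset ι) (a : ι → ℝ≥0∞) {r : ℝ} (hr : 1 ≤ r) :
    ∑ i ∈ s, a i ^ r ≤ (∑ i ∈ s, a i) ^ r := by
  induction s using Finset.cons_induction with
  | empty => simp [zero_rpow_of_pos (zero_lt_one.trans_le hr)]
  | cons i s hi ih =>
    rw [Finset.sum_cons, Finset.sum_cons]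
    exact (add_le_add_right ih _).trans (add_rpow_le_rpow_add _ _ hr)

theorem rpow_sum_le_sum_rpow (s : Finset ι) (a : ι → ℝ≥0∞) {r : ℝ} (hr0 : 0 < r)
    (hr1 : r ≤ 1) : (∑ i ∈ s, a i) ^ r ≤ ∑ i ∈ s, a i ^ r :=
  Finset.le_sum_of_subadditive (· ^ r) (zero_rpow_of_pos hr0).le
    (fun x y ↦ rpow_add_le_add_rpow x y hr0.le hr1) s a

theorem sum_rpow_one_sub_mul_rpow_le (s : Finset ι) (a b : ι → ℝ≥0∞) {r : ℝ} (hr0 : 0 < r)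
    (hr1 : r ≤ 1) :
    ∑ i ∈ s, a i ^ (1 - r) * b i ^ r ≤ (∑ i ∈ s, a i) ^ (1 - r) * (∑ i ∈ s, b i) ^ r := by
  obtain rfl | hr1 := hr1.eq_or_lt
  · simp
  have h := inner_le_Lp_mul_Lq s (fun i ↦ a i ^ (1 - r)) (fun i ↦ b i ^ r)
    (Real.HolderConjugate.one_sub_inv_inv hr0 hr1)
  have h1r : 0 < 1 - r := sub_pos.2 hr1
  simpa only [← rpow_mul, one_div, inv_inv, mul_inv_cancel₀ hr0.ne', mul_inv_cancel₀ h1r.ne',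
    rpow_one] using h

variable {α : Type*} [MeasurableSpace α] {ν : Measure α} {F : ι → α → ℝ≥0∞}

theorem sum_lintegral_rpow_le_lintegral_rpow_sum (s : Finset ι)
    (hF : ∀ i ∈ s, AEMeasurable (F i) ν) {r : ℝ} (hr : 1 ≤ r) :
    ∑ i ∈ s, ∫⁻ x, F i x ^ r ∂ν ≤ ∫⁻ x, (∑ i ∈ s, F i x) ^ r ∂ν := by
  rw [← lintegral_finsetSum' s fun i hi ↦ (hF i hi).pow_const r]
  exact lintegral_mono fun x ↦ sum_rpow_le_rpow_sum s (F · x) hr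

theorem lintegral_rpow_sum_le_sum_lintegral_rpow (s : Finset ι)
    (hF : ∀ i ∈ s, AEMeasurable (F i) ν) {r : ℝ} (hr0 : 0 < r) (hr1 : r ≤ 1) :
    ∫⁻ x, (∑ i ∈ s, F i x) ^ r ∂ν ≤ ∑ i ∈ s, ∫⁻ x, F i x ^ r ∂ν := by
  rw [← lintegral_finsetSum' s fun i hi ↦ (hF i hi).pow_const r]
  exact lintegral_mono fun x ↦ rpow_sum_le_sum_rpow s (F · x) hr0 hr1

theorem lintegral_Lp_finsetSum_le (s : Finset ι) (hF : ∀ i ∈ s, AEMeasurable (F i) ν) {r : ℝ}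
    (hr : 1 ≤ r) :
    (∫⁻ x, (∑ i ∈ s, F i x) ^ r ∂ν) ^ (1 / r) ≤ ∑ i ∈ s, (∫⁻ x, F i x ^ r ∂ν) ^ (1 / r) := by
  simpa only [Finset.sum_apply] using
    Finset.le_sum_of_subadditive_on_pred (fun G : α → ℝ≥0∞ ↦ (∫⁻ x, G x ^ r ∂ν) ^ (1 / r))
      (AEMeasurable · ν) (by simp [zero_lt_one.trans_le hr])
      (fun G H hG _ ↦ lintegral_Lp_add_le hG ‹_› hr) (fun _ _ hG hH ↦ hG.add hH) F hF

theorem sum_lintegral_Lp_le_lintegral_Lp_sum (s : Finset ι) (hF : ∀ i ∈ s, AEMeasurable (F i) ν)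
    {r : ℝ} (hr0 : 0 < r) (hr1 : r ≤ 1) :
    ∑ i ∈ s, (∫⁻ x, F i x ^ r ∂ν) ^ (1 / r) ≤ (∫⁻ x, (∑ i ∈ s, F i x) ^ r ∂ν) ^ (1 / r) := by
  set A : ι → ℝ≥0∞ := fun i ↦ ∫⁻ x, F i x ^ r ∂ν
  set C := ∫⁻ x, (∑ i ∈ s, F i x) ^ r ∂ν
  set S := ∑ i ∈ s, A i ^ (1 / r)
  have hsum : AEMeasurable (fun x ↦ ∑ i ∈ s, F i x) ν := Finset.aemeasurable_fun_sum s hF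
  have hA_le : ∀ i ∈ s, A i ≤ C := fun i hi ↦
    lintegral_mono fun x ↦ rpow_le_rpow (Finset.single_le_sum (f := (F · x)) (by simp) hi) hr0.le
  have hweight : ∀ i, (A i ^ (1 / r)) ^ (1 - r) * A i = A i ^ (1 / r) := fun i ↦ by
    rw [one_div]
    nth_rw 2 [← rpow_inv_rpow hr0.ne' (A i)]
    rw [← rpow_add_of_nonneg _ _ (sub_nonneg.2 hr1) hr0.le, sub_add_cancel, rpow_one]
  -- Hölder's inequality pointwise, with the weights `A i ^ (1 / r)`, integrated.
  have key : S ≤ S ^ (1 - r) * C := calc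
    S = ∑ i ∈ s, (A i ^ (1 / r)) ^ (1 - r) * A i := by simp only [S, hweight]
    _ = ∫⁻ x, ∑ i ∈ s, (A i ^ (1 / r)) ^ (1 - r) * F i x ^ r ∂ν := by
      rw [lintegral_finsetSum' s fun i hi ↦ ((hF i hi).pow_const r).const_mul _]
      exact Finset.sum_congr rfl fun i hi ↦ (lintegral_const_mul'' _ ((hF i hi).pow_const r)).symm
    _ ≤ ∫⁻ x, S ^ (1 - r) * (∑ i ∈ s, F i x) ^ r ∂ν :=
      lintegral_mono fun x ↦ sum_rpow_one_sub_mul_rpow_le s _ (F · x) hr0 hr1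
    _ = S ^ (1 - r) * C := lintegral_const_mul'' _ (hsum.pow_const r)
  rw [one_div, le_rpow_inv_iff hr0]
  obtain hS | hS := eq_or_ne S ⊤
  · obtain ⟨i, hi, hAi⟩ := sum_eq_top.1 hS
    have : A i = ⊤ := by simpa [hr0, hr0.not_gt] using hAi
    simp [hS, hr0, top_le_iff.1 (this ▸ hA_le i hi)]
  obtain hS0 | hS0 := eq_or_ne S 0
  · simp [hS0, hr0]
  rw [← ENNReal.mul_le_mul_iff_right (rpow_pos (pos_iff_ne_zero.2 hS0) hS).ne'
    (rpow_ne_top_of_nonneg (sub_nonneg.2 hr1) hS), ← rpow_add _ _ hS0 hS, sub_add_cancel, rpow_one]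
  exact key

end ENNReal

section Lorentz

variable {Ω : Type*}

theorem DisjSupp.sum_apply_eq {n : ℕ} {f : Fin n → Ω → ℝ} (hd : DisjSupp f) {x : Ω} {i : Fin n}
    (hi : f i x ≠ 0) : ∑ j, f j x = f i x :=
  Finset.sum_eq_single i (fun j _ hji ↦ (hd j i hji x).resolve_right hi) (by simp)

variable [MeasurableSpace Ω] {μ : Measure Ω} {p q : ℝ}

theorem DisjSupp.measure_lt_abs_sum {n : ℕ} {f : Fin n → Ω → ℝ} (hd : DisjSupp f)
    (hm : ∀ i, Measurable (f i)) {t : ℝ} (ht : 0 ≤ t) :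
    μ {x | t < |∑ i, f i x|} = ∑ i, μ {x | t < |f i x|} := by
  have hne : ∀ {y : ℝ}, t < |y| → y ≠ 0 := fun h h0 ↦ by simp [h0] at h; linarith
  have hunion : {x | t < |∑ i, f i x|} = ⋃ i, {x | t < |f i x|} := by
    ext x
    simp only [mem_ofPred_eq, mem_iUnion]
    constructor
    · intro h
      by_cases! hzero : ∀ i, f i x = 0
      · simp [hzero] at h; linarith
      obtain ⟨i, hi⟩ := hzero
      exact ⟨i, hd.sum_apply_eq hi ▸ h⟩
    · rintro ⟨i, hi⟩
      rwa [hd.sum_apply_eq (hne hi)]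
  have hdisj : Pairwise (Function.onFun Disjoint fun i ↦ {x | t < |f i x|}) := fun i j hij ↦
    Set.disjoint_left.2 fun x hi hj ↦ (hd i j hij x).elim (hne hi) (hne hj)
  rw [hunion, measure_iUnion hdisj fun i ↦ measurableSet_lt measurable_const (hm i).abs,
    tsum_fintype]

noncomputable def lorentzProfile (μ : Measure Ω) (p q : ℝ) (f : Ω → ℝ) (t : ℝ) : ℝ≥0∞ :=
  ENNReal.ofReal (q * t ^ (q - 1)) ^ (p / q) * μ {x | t < |f x|}

theorem measurable_lorentzProfile (f : Ω → ℝ) : Measurable (lorentzProfile μ p q f) := by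
  have hanti : Antitone fun t ↦ μ {x | t < |f x|} := fun _ _ hst ↦
    measure_mono fun _ hx ↦ hst.trans_lt hx
  exact (by fun_prop : Measurable fun t : ℝ ↦ ENNReal.ofReal (q * t ^ (q - 1)) ^ (p / q)).mul
    hanti.measurable

theorem DisjSupp.lorentzProfile_sum {n : ℕ} {f : Fin n → Ω → ℝ} (hd : DisjSupp f)
    (hm : ∀ i, Measurable (f i)) {t : ℝ} (ht : 0 ≤ t) :
    lorentzProfile μ p q (fun x ↦ ∑ i, f i x) t = ∑ i, lorentzProfile μ p q (f i) t := by
  rw [lorentzProfile, hd.measure_lt_abs_sum hm ht, Finset.mul_sum]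
  rfl

theorem lorentzNorm_rpow_eq_lintegral (hp : 0 < p) (hq : 0 < q) (f : Ω → ℝ) :
    LorentzNorm μ p q f ^ q = ∫⁻ t in Ioi 0, lorentzProfile μ p q f t ^ (q / p) := by
  rw [LorentzNorm, ← rpow_mul, one_div_mul_cancel hq.ne', rpow_one]
  refine lintegral_congr fun t ↦ ?_
  rw [lorentzProfile, mul_rpow_of_nonneg _ _ (by positivity), ← rpow_mul,
    div_mul_div_cancel₀ hq.ne', div_self hp.ne', rpow_one]

theorem lorentzNorm_rpow_eq_Lp (hp : 0 < p) (hq : 0 < q) (f : Ω → ℝ) :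
    LorentzNorm μ p q f ^ p =
      (∫⁻ t in Ioi 0, lorentzProfile μ p q f t ^ (q / p)) ^ (1 / (q / p)) := by
  rw [← lorentzNorm_rpow_eq_lintegral hp hq, ← rpow_mul, mul_one_div, div_div_cancel₀ hq.ne']

section DisjointSum

variable {n : ℕ} {f : Fin n → Ω → ℝ}

theorem DisjSupp.lintegral_lorentzProfile_sum (hd : DisjSupp f) (hm : ∀ i, Measurable (f i))
    (r : ℝ) :
    ∫⁻ t in Ioi 0, lorentzProfile μ p q (fun x ↦ ∑ i, f i x) t ^ r =
      ∫⁻ t in Ioi 0, (∑ i, lorentzProfile μ p q (f i) t) ^ r :=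
  setLIntegral_congr_fun measurableSet_Ioi fun _ ht ↦ by
    rw [hd.lorentzProfile_sum hm (le_of_lt ht)]

theorem DisjSupp.lorentzNorm_sum_rpow_le_of_le (hd : DisjSupp f) (hp : 0 < p) (hq : 0 < q)
    (hm : ∀ i, Measurable (f i)) (hpq : p ≤ q) :
    LorentzNorm μ p q (fun x ↦ ∑ i, f i x) ^ p ≤ ∑ i, LorentzNorm μ p q (f i) ^ p := by
  simp only [lorentzNorm_rpow_eq_Lp hp hq, hd.lintegral_lorentzProfile_sum hm]
  exact lintegral_Lp_finsetSum_le _ (fun i _ ↦ (measurable_lorentzProfile _).aemeasurable)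
    ((one_le_div hp).2 hpq)

theorem DisjSupp.sum_lorentzNorm_rpow_le_of_le (hd : DisjSupp f) (hp : 0 < p) (hq : 0 < q)
    (hm : ∀ i, Measurable (f i)) (hpq : p ≤ q) :
    ∑ i, LorentzNorm μ p q (f i) ^ q ≤ LorentzNorm μ p q (fun x ↦ ∑ i, f i x) ^ q := by
  simp only [lorentzNorm_rpow_eq_lintegral hp hq, hd.lintegral_lorentzProfile_sum hm]
  exact sum_lintegral_rpow_le_lintegral_rpow_sum _
    (fun i _ ↦ (measurable_lorentzProfile _).aemeasurable) ((one_le_div hp).2 hpq)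

theorem DisjSupp.lorentzNorm_sum_rpow_le_of_ge (hd : DisjSupp f) (hp : 0 < p) (hq : 0 < q)
    (hm : ∀ i, Measurable (f i)) (hqp : q ≤ p) :
    LorentzNorm μ p q (fun x ↦ ∑ i, f i x) ^ q ≤ ∑ i, LorentzNorm μ p q (f i) ^ q := by
  simp only [lorentzNorm_rpow_eq_lintegral hp hq, hd.lintegral_lorentzProfile_sum hm]
  exact lintegral_rpow_sum_le_sum_lintegral_rpow _
    (fun i _ ↦ (measurable_lorentzProfile _).aemeasurable) (div_pos hq hp) ((div_le_one hp).2 hqp)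

theorem DisjSupp.sum_lorentzNorm_rpow_le_of_ge (hd : DisjSupp f) (hp : 0 < p) (hq : 0 < q)
    (hm : ∀ i, Measurable (f i)) (hqp : q ≤ p) :
    ∑ i, LorentzNorm μ p q (f i) ^ p ≤ LorentzNorm μ p q (fun x ↦ ∑ i, f i x) ^ p := by
  simp only [lorentzNorm_rpow_eq_Lp hp hq, hd.lintegral_lorentzProfile_sum hm]
  exact sum_lintegral_Lp_le_lintegral_Lp_sum _
    (fun i _ ↦ (measurable_lorentzProfile _).aemeasurable) (div_pos hq hp) ((div_le_one hp).2 hqp)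

end DisjointSum

end Lorentz

theorem lorentz_upper_lower_estimates_general
    {Ω : Type*}
    [MeasurableSpace Ω]
    (μ : Measure Ω)
    (p q : ℝ) (hp : 0 < p) (hq : 0 < q) :
    (p ≤ q →
      ∀ (n : ℕ) (f : Fin n → Ω → ℝ), (∀ i, Measurable (f i)) → DisjSupp f →
        LorentzNorm μ p q (fun x => ∑ i, f i x) ≤
            (∑ i, LorentzNorm μ p q (f i) ^ p) ^ (1 / p) ∧
        (∑ i, LorentzNorm μ p q (f i) ^ q) ^ (1 / q) ≤
            LorentzNorm μ p q (fun x => ∑ i, f i x)) ∧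
    (q < p →
      ∀ (n : ℕ) (f : Fin n → Ω → ℝ), (∀ i, Measurable (f i)) → DisjSupp f →
        LorentzNorm μ p q (fun x => ∑ i, f i x) ≤
            (∑ i, LorentzNorm μ p q (f i) ^ q) ^ (1 / q) ∧
        (∑ i, LorentzNorm μ p q (f i) ^ p) ^ (1 / p) ≤
            LorentzNorm μ p q (fun x => ∑ i, f i x)) := by
  simp only [one_div, le_rpow_inv_iff hp, le_rpow_inv_iff hq, rpow_inv_le_iff hp,
    rpow_inv_le_iff hq]
  exact ⟨fun hpq n f hm hd ↦ ⟨hd.lorentzNorm_sum_rpow_le_of_le hp hq hm hpq,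
      hd.sum_lorentzNorm_rpow_le_of_le hp hq hm hpq⟩,
    fun hqp n f hm hd ↦ ⟨hd.lorentzNorm_sum_rpow_le_of_ge hp hq hm hqp.le,
      hd.sum_lorentzNorm_rpow_le_of_ge hp hq hm hqp.le⟩⟩

/-- For a finite Borel measure `μ` and `0 < p, q < ∞`: if `p ≤ q` then
`L_{p,q}(μ)` satisfies an upper `p`-estimate and a lower `q`-estimate; if `p > q` it
satisfies an upper `q`-estimate and a lower `p`-estimate. -/
theorem lorentz_upper_lower_estimates
    {Ω : Type*} [TopologicalSpace Ω] [CompactSpace Ω] [T2Space Ω]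
    [MeasurableSpace Ω] [BorelSpace Ω]
    (μ : Measure Ω) [IsFiniteMeasure μ]
    (p q : ℝ) (hp : 0 < p) (hq : 0 < q) :
    (p ≤ q →
      ∀ (n : ℕ) (f : Fin n → Ω → ℝ), (∀ i, Measurable (f i)) → DisjSupp f →
        LorentzNorm μ p q (fun x => ∑ i, f i x) ≤
            (∑ i, LorentzNorm μ p q (f i) ^ p) ^ (1 / p) ∧
        (∑ i, LorentzNorm μ p q (f i) ^ q) ^ (1 / q) ≤
            LorentzNorm μ p q (fun x => ∑ i, f i x)) ∧
    (q < p →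
      ∀ (n : ℕ) (f : Fin n → Ω → ℝ), (∀ i, Measurable (f i)) → DisjSupp f →
        LorentzNorm μ p q (fun x => ∑ i, f i x) ≤
            (∑ i, LorentzNorm μ p q (f i) ^ q) ^ (1 / q) ∧
        (∑ i, LorentzNorm μ p q (f i) ^ p) ^ (1 / p) ≤
            LorentzNorm μ p q (fun x => ∑ i, f i x)) :=
  lorentz_upper_lower_estimates_general μ p q hp hq
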